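/- Let T > 0 and let f : (0,T) → ℝ be measurable. Define F(t) = ∫₀ᵗ |ln(τ/(e·T))|^{-1} f(τ)/τ dτ for 0 < t < T. Then ∫₀ᵀ |ln(t/(e·T))| · |F(t)| dt/t ≤ (1/2) · ∫₀ᵀ |ln(t/(e·T))| · |f(t)| dt/t. -/

import Mathlib

/-!
Write `w(t) = |ln(t/(eT))|`, which equals `1 + ln T - ln t ≥ 1` on `(0, T]`. Bounding `|F(t)|` by
`∫₀ᵗ |f|/(wτ)` and exchanging the order of integration (Tonelli), the left-hand side is at most
`∫₀ᵀ |f(τ)|/(w(τ) τ) · (∫_τ^T w(t)/t dt) dτ`. Since `-w²/2` is a primitive of `w(t)/t`, the inner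
integral is `(w(τ)² - 1)/2 ≤ w(τ)²/2`, which gives the factor `1/2`.
-/

open MeasureTheory Set
open scoped ENNReal

theorem continuousOn_sub_log_div_self (c : ℝ) :
    ContinuousOn (fun t => (c - Real.log t) / t) (Ioi 0) :=
  (continuousOn_const.sub (Real.continuousOn_log.mono fun _ ht => ne_of_gt ht)).div
    continuousOn_id fun _ ht => ne_of_gt ht

theorem integral_sub_log_div_self {a b : ℝ} (c : ℝ) (ha : 0 < a) (hb : 0 < b) :
    ∫ t in a..b, (c - Real.log t) / t = ((c - Real.log a) ^ 2 - (c - Real.log b) ^ 2) / 2 := by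
  have hpos : uIcc a b ⊆ Ioi 0 := fun t ht => (lt_min ha hb).trans_le (by simpa using ht.1)
  rw [intervalIntegral.integral_eq_sub_of_hasDerivAt (f := fun t => -(c - Real.log t) ^ 2 / 2)]
  · ring
  · intro t ht
    refine ((((Real.hasDerivAt_log (ne_of_gt (hpos ht))).const_sub c).fun_pow 2).fun_neg.div_const
      2).congr_deriv ?_
    field_simp
    ring
  · exact ((continuousOn_sub_log_div_self c).mono hpos).intervalIntegrable

theorem lintegral_Ioo_mul_lintegral_Ioo_comm {μ : Measure ℝ} [SFinite μ] {a b : ℝ}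
    {k g : ℝ → ℝ≥0∞} (hk : AEMeasurable k (μ.restrict (Ioo a b)))
    (hg : AEMeasurable g (μ.restrict (Ioo a b))) :
    ∫⁻ t in Ioo a b, k t * ∫⁻ s in Ioo a t, g s ∂μ ∂μ
      = ∫⁻ s in Ioo a b, g s * ∫⁻ t in Ioo s b, k t ∂μ ∂μ := by
  set Φ : ℝ → ℝ → ℝ≥0∞ := fun t s =>
    {p : ℝ × ℝ | p.2 < p.1}.indicator (fun p => k p.1 * g p.2) (t, s)
  have hΦ : AEMeasurable (Function.uncurry Φ)
      ((μ.restrict (Ioo a b)).prod (μ.restrict (Ioo a b))) :=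
    (hk.comp_fst.mul hg.comp_snd).indicator (measurableSet_lt measurable_snd measurable_fst)
  have hleft : ∀ t ∈ Ioo a b,
      k t * ∫⁻ s in Ioo a t, g s ∂μ = ∫⁻ s in Ioo a b, Φ t s ∂μ := by
    intro t ht
    have : ∀ s, Φ t s = (Iio t).indicator (fun s => k t * g s) s := fun s => by
      simp [Φ, indicator_apply]
    simp_rw [this]
    rw [lintegral_indicator measurableSet_Iio, Measure.restrict_restrict measurableSet_Iio,
      Iio_inter_Ioo, min_eq_left ht.2.le,
      lintegral_const_mul'' _ (hg.mono_set (Ioo_subset_Ioo_right ht.2.le))]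
  have hright : ∀ s ∈ Ioo a b,
      g s * ∫⁻ t in Ioo s b, k t ∂μ = ∫⁻ t in Ioo a b, Φ t s ∂μ := by
    intro s hs
    have : ∀ t, Φ t s = (Ioi s).indicator (fun t => k t * g s) t := fun t => by
      simp [Φ, indicator_apply]
    simp_rw [this]
    rw [lintegral_indicator measurableSet_Ioi, Measure.restrict_restrict measurableSet_Ioi,
      Ioi_inter_Ioo, max_eq_left hs.1.le,
      lintegral_mul_const'' _ (hk.mono_set (Ioo_subset_Ioo_left hs.1.le)), mul_comm]
  rw [setLIntegral_congr_fun measurableSet_Ioo hleft,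
    setLIntegral_congr_fun measurableSet_Ioo hright]
  exact lintegral_lintegral_swap hΦ

noncomputable def logWeight (T t : ℝ) : ℝ := |Real.log (t / (Real.exp 1 * T))|

section logWeight

variable {T t : ℝ}

@[fun_prop]
theorem measurable_logWeight (T : ℝ) : Measurable (logWeight T) := by
  unfold logWeight; fun_prop

theorem logWeight_nonneg (T t : ℝ) : 0 ≤ logWeight T t := abs_nonneg _

theorem logWeight_eq (hT : 0 < T) (ht : 0 < t) (htT : t ≤ T) :
    logWeight T t = 1 + Real.log T - Real.log t := by
  have hlog : Real.log t ≤ Real.log T := Real.log_le_log ht htT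
  rw [logWeight, Real.log_div ht.ne' (by positivity), Real.log_mul (Real.exp_ne_zero 1) hT.ne',
    Real.log_exp, abs_of_nonpos (by linarith)]
  ring

theorem one_le_logWeight (hT : 0 < T) (ht : 0 < t) (htT : t ≤ T) : 1 ≤ logWeight T t := by
  rw [logWeight_eq hT ht htT]
  linarith [Real.log_le_log ht htT]

theorem enorm_inv_logWeight_mul_div (hT : 0 < T) (ht : 0 < t) (htT : t ≤ T) (x : ℝ) :
    ‖(logWeight T t)⁻¹ * x / t‖ₑ
      = ENNReal.ofReal (logWeight T t * |x| / t / logWeight T t ^ 2) := by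
  have hw : 0 < logWeight T t := one_pos.trans_le (one_le_logWeight hT ht htT)
  rw [Real.enorm_eq_ofReal_abs, abs_div, abs_mul, abs_inv, abs_of_pos ht, abs_of_pos hw]
  congr 1
  field_simp

theorem lintegral_logWeight_div (hT : 0 < T) (ht : 0 < t) (htT : t ≤ T) :
    ∫⁻ s in Ioo t T, ENNReal.ofReal (logWeight T s / s)
      = ENNReal.ofReal ((logWeight T t ^ 2 - 1) / 2) := by
  set c := 1 + Real.log T
  have hw : ∀ s ∈ Ioo t T, logWeight T s = c - Real.log s :=
    fun s hs => logWeight_eq hT (ht.trans hs.1) hs.2.le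
  have hint : IntegrableOn (fun s => (c - Real.log s) / s) (Ioo t T) :=
    (((continuousOn_sub_log_div_self c).mono fun _ hs => ht.trans_le hs.1).integrableOn_Icc)
      |>.mono_set Ioo_subset_Icc_self
  rw [setLIntegral_congr_fun measurableSet_Ioo fun s hs => by rw [hw s hs],
    ← ofReal_integral_eq_lintegral_ofReal hint ((ae_restrict_mem measurableSet_Ioo).mono
      fun s hs => div_nonneg (hw s hs ▸ logWeight_nonneg T s) (ht.trans hs.1).le),
    ← integral_Ioc_eq_integral_Ioo, ← intervalIntegral.integral_of_le htT,
    integral_sub_log_div_self c ht (ht.trans_le htT), logWeight_eq hT ht htT]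
  simp [c]

/-- A weighted Hardy inequality. -/
theorem ofReal_integral_logWeight_mul_abs_primitive_le (hT : 0 < T) {φ : ℝ → ℝ}
    (hφ : AEMeasurable (fun s => ‖φ s‖ₑ) (volume.restrict (Ioo 0 T))) :
    ENNReal.ofReal (∫ t in Ioo 0 T, logWeight T t * |∫ s in Ioo 0 t, φ s| / t)
      ≤ ∫⁻ s in Ioo 0 T, ENNReal.ofReal (logWeight T s ^ 2 / 2) * ‖φ s‖ₑ :=
  calc ENNReal.ofReal (∫ t in Ioo 0 T, logWeight T t * |∫ s in Ioo 0 t, φ s| / t)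
      ≤ ∫⁻ t in Ioo 0 T, ‖logWeight T t * |∫ s in Ioo 0 t, φ s| / t‖ₑ :=
        (Real.ofReal_le_enorm _).trans (enorm_integral_le_lintegral_enorm _)
    _ ≤ ∫⁻ t in Ioo 0 T,
          ENNReal.ofReal (logWeight T t / t) * ∫⁻ s in Ioo 0 t, ‖φ s‖ₑ := by
        refine setLIntegral_mono' measurableSet_Ioo fun t ht => ?_
        rw [mul_div_right_comm, enorm_mul,
          Real.enorm_of_nonneg (div_nonneg (logWeight_nonneg T t) ht.1.le), Real.enorm_abs]
        gcongr
        exact enorm_integral_le_lintegral_enorm φ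
    _ = ∫⁻ s in Ioo 0 T,
          ‖φ s‖ₑ * ∫⁻ t in Ioo s T, ENNReal.ofReal (logWeight T t / t) :=
        lintegral_Ioo_mul_lintegral_Ioo_comm (by fun_prop) hφ
    _ ≤ ∫⁻ s in Ioo 0 T, ENNReal.ofReal (logWeight T s ^ 2 / 2) * ‖φ s‖ₑ := by
        refine setLIntegral_mono' measurableSet_Ioo fun s hs => ?_
        rw [lintegral_logWeight_div hT hs.1 hs.2.le, mul_comm]
        gcongr
        linarith

end logWeight

theorem stmt_4_general (T : ℝ) (hT : 0 < T) (f : ℝ → ℝ)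
    (hint : IntegrableOn (fun t => |Real.log (t / (Real.exp 1 * T))| * |f t| / t) (Ioo 0 T)) :
    (∫ t in Ioo 0 T, |Real.log (t / (Real.exp 1 * T))| *
        |∫ τ in Ioo 0 t, |Real.log (τ / (Real.exp 1 * T))|⁻¹ * f τ / τ| / t)
      ≤ (1 / 2) * ∫ t in Ioo 0 T, |Real.log (t / (Real.exp 1 * T))| * |f t| / t := by
  set w := logWeight T
  set h := fun t => w t * |f t| / t
  change IntegrableOn h (Ioo 0 T) at hint
  change ∫ t in Ioo 0 T, w t * |∫ τ in Ioo 0 t, (w τ)⁻¹ * f τ / τ| / t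
    ≤ 1 / 2 * ∫ t in Ioo 0 T, h t
  have hh : ∀ τ ∈ Ioo 0 T, 0 ≤ h τ := fun τ hτ =>
    div_nonneg (mul_nonneg (logWeight_nonneg T τ) (abs_nonneg _)) hτ.1.le
  have hφ : ∀ τ ∈ Ioo 0 T,
      ‖(w τ)⁻¹ * f τ / τ‖ₑ = ENNReal.ofReal (h τ / w τ ^ 2) :=
    fun τ hτ => enorm_inv_logWeight_mul_div hT hτ.1 hτ.2.le (f τ)
  have hφ_meas : AEMeasurable (fun τ => ‖(w τ)⁻¹ * f τ / τ‖ₑ) (volume.restrict (Ioo 0 T)) :=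
    (hint.aemeasurable.div ((measurable_logWeight T).pow_const 2).aemeasurable)
      |>.ennreal_ofReal.congr
      ((ae_restrict_mem measurableSet_Ioo).mono fun τ hτ => (hφ τ hτ).symm)
  have hRHS : ∫⁻ τ in Ioo 0 T, ENNReal.ofReal (w τ ^ 2 / 2) * ‖(w τ)⁻¹ * f τ / τ‖ₑ
      = ENNReal.ofReal (1 / 2 * ∫ t in Ioo 0 T, h t) := by
    rw [← integral_const_mul, ofReal_integral_eq_lintegral_ofReal (hint.const_mul _)
      ((ae_restrict_mem measurableSet_Ioo).mono fun τ hτ =>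
        mul_nonneg one_half_pos.le (hh τ hτ))]
    refine setLIntegral_congr_fun measurableSet_Ioo fun τ hτ => ?_
    have hwτ : 0 < w τ := one_pos.trans_le (one_le_logWeight hT hτ.1 hτ.2.le)
    rw [hφ τ hτ, ← ENNReal.ofReal_mul (by positivity)]
    congr 1
    field_simp
  refine (ENNReal.ofReal_le_ofReal_iff ?_).1
    ((ofReal_integral_logWeight_mul_abs_primitive_le hT hφ_meas).trans_eq hRHS)
  exact mul_nonneg one_half_pos.le (setIntegral_nonneg measurableSet_Ioo hh)

theorem stmt_4 (T : ℝ) (hT : 0 < T) (f : ℝ → ℝ) (hf : Measurable f)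
    (hint : IntegrableOn (fun t => |Real.log (t / (Real.exp 1 * T))| * |f t| / t) (Ioo 0 T)) :
    (∫ t in Ioo 0 T, |Real.log (t / (Real.exp 1 * T))| *
        |∫ τ in Ioo 0 t, |Real.log (τ / (Real.exp 1 * T))|⁻¹ * f τ / τ| / t)
      ≤ (1 / 2) * ∫ t in Ioo 0 T, |Real.log (t / (Real.exp 1 * T))| * |f t| / t :=
  stmt_4_general T hT f hint
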